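/- arXiv:2409.12058 — 5 statements merged into one kernel-verified Lean document; each statement's English description precedes it below -/
import Mathlib

section
/- For λ > 0 and y ≠ 0, the λ-Funk metric satisfies the navigation equation ||y/F(x,y) - W_x|| = 1, where W_x = -λx, for all x with ||x|| < 1/λ. -/
set_option maxHeartbeats 1000000


open RealInnerProductSpace Classical

noncomputable def pt (a b : ℝ) : EuclideanSpace ℝ (Fin 2) :=
  (WithLp.equiv 2 (Fin 2 → ℝ)).symm ![a, b]

/-- The λ-Funk metric. -/
noncomputable def Funk (lam : ℝ) (x y : EuclideanSpace ℝ (Fin 2)) : ℝ :=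
  (Real.sqrt (lam ^ 2 * ⟪x, y⟫ ^ 2 + ‖y‖ ^ 2 * (1 - lam ^ 2 * ‖x‖ ^ 2)) + lam * ⟪x, y⟫) /
    (1 - lam ^ 2 * ‖x‖ ^ 2)

/-- The λ-Funk distance. -/
noncomputable def dF (lam : ℝ) (P Q : EuclideanSpace ℝ (Fin 2)) : ℝ :=
  if P = Q then 0
  else (1 / lam) * Real.log
    ((Real.sqrt (lam ^ 2 * ⟪P, Q - P⟫ ^ 2 + (1 - lam ^ 2 * ‖P‖ ^ 2) * ‖Q - P‖ ^ 2)
        - lam * ⟪P, Q - P⟫) /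
     (Real.sqrt (lam ^ 2 * ⟪P, Q - P⟫ ^ 2 + (1 - lam ^ 2 * ‖P‖ ^ 2) * ‖Q - P‖ ^ 2)
        - lam * ⟪Q, Q - P⟫))

theorem lambdaFunk_navigation (lam : ℝ) (hlam : 0 < lam) (x y : EuclideanSpace ℝ (Fin 2))
    (hx : ‖x‖ < 1 / lam) (hy : y ≠ 0) :
    ‖(1 / Funk lam x y) • y - (-lam • x)‖ = 1 := by
  set p : ℝ := ⟪x, y⟫ with hp
  have hA : 0 < 1 - lam ^ 2 * ‖x‖ ^ 2 := by
    have h1 : lam * ‖x‖ < 1 := by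
      have := (lt_div_iff₀ hlam).mp hx
      linarith
    have h2 : (0:ℝ) ≤ lam * ‖x‖ := mul_nonneg hlam.le (norm_nonneg x)
    nlinarith [mul_pos (by linarith : (0:ℝ) < 1 - lam * ‖x‖)
      (by linarith : (0:ℝ) < 1 + lam * ‖x‖)]
  have hy2 : 0 < ‖y‖ := norm_pos_iff.mpr hy
  have harg : 0 < lam ^ 2 * p ^ 2 + ‖y‖ ^ 2 * (1 - lam ^ 2 * ‖x‖ ^ 2) := by
    nlinarith [sq_nonneg (lam * p), mul_pos (pow_pos hy2 2) hA]
  set S : ℝ := Real.sqrt (lam ^ 2 * p ^ 2 + ‖y‖ ^ 2 * (1 - lam ^ 2 * ‖x‖ ^ 2)) with hS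
  have hS2 : S ^ 2 = lam ^ 2 * p ^ 2 + ‖y‖ ^ 2 * (1 - lam ^ 2 * ‖x‖ ^ 2) :=
    Real.sq_sqrt harg.le
  have hSnn : 0 ≤ S := Real.sqrt_nonneg _
  have hSpos : 0 < S := Real.sqrt_pos.mpr harg
  have hSp : 0 < S + lam * p := by
    rcases le_or_gt 0 (lam * p) with h | h
    · linarith
    · nlinarith [hS2, mul_pos (pow_pos hy2 2) hA]
  have hF : Funk lam x y = (S + lam * p) / (1 - lam ^ 2 * ‖x‖ ^ 2) := rfl
  have hFpos : 0 < Funk lam x y := by rw [hF]; positivity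
  set F : ℝ := Funk lam x y with hFdef
  have hkey : (1 - lam ^ 2 * ‖x‖ ^ 2) * F ^ 2 - 2 * lam * p * F = ‖y‖ ^ 2 := by
    rw [hF]
    field_simp
    nlinarith [hS2]
  have hnorm : ‖(1 / F) • y - (-lam • x)‖ ^ 2 =
      (1 / F) ^ 2 * ‖y‖ ^ 2 + 2 * ((1 / F) * lam * p) + lam ^ 2 * ‖x‖ ^ 2 := by
    have h0 : (1 / F) • y - (-lam • x) = (1 / F) • y + lam • x := by
      rw [neg_smul, sub_neg_eq_add]
    have hyx : ⟪y, x⟫ = p := by rw [hp]; exact real_inner_comm x y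
    rw [h0, @norm_add_sq_real, real_inner_smul_left, real_inner_smul_right, norm_smul,
      norm_smul, hyx]
    simp only [Real.norm_eq_abs, abs_of_pos hFpos, abs_of_pos hlam, one_div,
      abs_of_pos (inv_pos.mpr hFpos)]
    ring
  have hsq : ‖(1 / F) • y - (-lam • x)‖ ^ 2 = 1 := by
    rw [hnorm]
    have hFne : F ≠ 0 := ne_of_gt hFpos
    field_simp
    nlinarith [hkey]
  have hnn : 0 ≤ ‖(1 / F) • y - (-lam • x)‖ := norm_nonneg _
  nlinarith [hsq, hnn]
end

section
/- The function φ(r,s) = (√(1 + λ²(s² - r²)) + λs)/(1 - λ²r²), defined for λ ≥ 0 and (r,s) with λr < 1 and 1 + λ²(s² - r²) > 0, satisfies the PDE r·φ_ss - φ_r + s·φ_rs = 0. -/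
/-!
Write `Q = √(1 + λ²(s² - r²))`. Since `(Q + λs)(Q - λs) = 1 - λ²r²`, we have `φ (Q - λs) = 1`
wherever `1 - λ²r² ≠ 0`, and there `φ_s = λφ/Q` and `φ_r = λ²rφ²/Q`. Differentiating `λφ/Q` once
more in `s` and in `r` turns the PDE into a consequence of `φ (Q - λs) = 1`.

Where `λ²r² = 1` the function `φ(r, ·)` vanishes (division by zero), while
`φ(·, s)` is not differentiable at `r`: off `r` the product `φ · (1 - λ²u²)` equals `Q + λs`,
whose `r`-derivative `-λ²r/Q` is nonzero, but if `φ(·, s)` were differentiable the product would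
have derivative `0` at `r`. Nor is `φ_s(·, s) = λφ/Q`, so all three terms are `0` for `deriv`.
-/

/-- The generating function of the λ-Funk metric as a spherically symmetric metric. -/
noncomputable def phi (lam r s : ℝ) : ℝ :=
  (Real.sqrt (1 + lam ^ 2 * (s ^ 2 - r ^ 2)) + lam * s) / (1 - lam ^ 2 * r ^ 2)

open Filter Topology

theorem HasDerivAt.eq_of_eventuallyEq_nhdsNE {𝕜 F : Type*} [NontriviallyNormedField 𝕜]
    [NormedAddCommGroup F] [NormedSpace 𝕜 F] {f g : 𝕜 → F} {f' g' : F} {x : 𝕜}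
    (hf : HasDerivAt f f' x) (hg : HasDerivAt g g' x) (h : f =ᶠ[𝓝[≠] x] g) : f' = g' := by
  have hx : f x = g x := tendsto_nhds_unique_of_eventuallyEq
    (hf.continuousAt.tendsto.mono_left nhdsWithin_le_nhds)
    (hg.continuousAt.tendsto.mono_left nhdsWithin_le_nhds) h
  exact hf.unique (hg.congr_of_eventuallyEq (eventuallyEq_nhds_of_eventuallyEq_nhdsNE h hx))

noncomputable def funkRoot (lam r s : ℝ) : ℝ :=
  √(1 + lam ^ 2 * (s ^ 2 - r ^ 2))

section

variable {lam r s : ℝ}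

theorem phi_eq_funkRoot :
    phi lam r s = (funkRoot lam r s + lam * s) / (1 - lam ^ 2 * r ^ 2) := rfl

theorem funkRoot_pos (hA : 0 < 1 + lam ^ 2 * (s ^ 2 - r ^ 2)) : 0 < funkRoot lam r s :=
  Real.sqrt_pos.mpr hA

theorem funkRoot_sq (hA : 0 ≤ 1 + lam ^ 2 * (s ^ 2 - r ^ 2)) :
    funkRoot lam r s ^ 2 = 1 + lam ^ 2 * (s ^ 2 - r ^ 2) :=
  Real.sq_sqrt hA

theorem phi_mul_funkRoot_sub (hD : 1 - lam ^ 2 * r ^ 2 ≠ 0)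
    (hA : 0 ≤ 1 + lam ^ 2 * (s ^ 2 - r ^ 2)) :
    phi lam r s * (funkRoot lam r s - lam * s) = 1 := by
  rw [phi_eq_funkRoot, div_mul_eq_mul_div, div_eq_one_iff_eq hD]
  linear_combination funkRoot_sq hA

theorem phi_eq_zero (hD : 1 - lam ^ 2 * r ^ 2 = 0) : phi lam r = 0 := by
  ext v
  simp [phi, hD]

theorem hasDerivAt_funkRoot_s (hA : 0 < 1 + lam ^ 2 * (s ^ 2 - r ^ 2)) :
    HasDerivAt (funkRoot lam r) (lam ^ 2 * s / funkRoot lam r s) s := by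
  have h := (((hasDerivAt_pow 2 s).sub_const (r ^ 2)).const_mul (lam ^ 2)).const_add 1
    |>.sqrt hA.ne'
  refine h.congr_deriv ?_
  simp only [funkRoot, Nat.cast_ofNat, pow_one, Nat.add_one_sub_one]
  field_simp

theorem hasDerivAt_funkRoot_r (hA : 0 < 1 + lam ^ 2 * (s ^ 2 - r ^ 2)) :
    HasDerivAt (fun u => funkRoot lam u s) (-(lam ^ 2 * r) / funkRoot lam r s) r := by
  have h := (((hasDerivAt_pow 2 r).const_sub (s ^ 2)).const_mul (lam ^ 2)).const_add 1
    |>.sqrt hA.ne'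
  refine h.congr_deriv ?_
  simp only [funkRoot, Nat.cast_ofNat, pow_one, Nat.add_one_sub_one]
  field_simp

theorem hasDerivAt_phi_s (hA : 0 < 1 + lam ^ 2 * (s ^ 2 - r ^ 2)) :
    HasDerivAt (phi lam r) (lam * phi lam r s / funkRoot lam r s) s := by
  have hQ := (funkRoot_pos hA).ne'
  have h := ((hasDerivAt_funkRoot_s hA).add ((hasDerivAt_id s).const_mul lam)).div_const
    (1 - lam ^ 2 * r ^ 2)
  refine h.congr_deriv ?_
  rw [phi_eq_funkRoot]
  field_simp
  ring

theorem hasDerivAt_phi_r (hD : 1 - lam ^ 2 * r ^ 2 ≠ 0)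
    (hA : 0 < 1 + lam ^ 2 * (s ^ 2 - r ^ 2)) :
    HasDerivAt (fun u => phi lam u s) (lam ^ 2 * r * phi lam r s ^ 2 / funkRoot lam r s) r := by
  have hQ := (funkRoot_pos hA).ne'
  have h := ((hasDerivAt_funkRoot_r hA).add_const (lam * s)).div
    (((hasDerivAt_pow 2 r).const_mul (lam ^ 2)).const_sub 1) hD
  refine h.congr_deriv ?_
  rw [phi_eq_funkRoot]
  field_simp
  linear_combination lam ^ 2 * r * funkRoot_sq hA.le

theorem deriv_phi_eventuallyEq_s (hA : 0 < 1 + lam ^ 2 * (s ^ 2 - r ^ 2)) :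
    deriv (phi lam r) =ᶠ[𝓝 s] fun v => lam * phi lam r v / funkRoot lam r v := by
  filter_upwards [continuousAt_const.eventually_lt
    (g := fun v => 1 + lam ^ 2 * (v ^ 2 - r ^ 2)) (by fun_prop) hA] with v hv
  exact (hasDerivAt_phi_s hv).deriv

theorem deriv_phi_eventuallyEq_r (hA : 0 < 1 + lam ^ 2 * (s ^ 2 - r ^ 2)) :
    (fun u => deriv (phi lam u) s) =ᶠ[𝓝 r] fun u => lam * phi lam u s / funkRoot lam u s := by
  filter_upwards [continuousAt_const.eventually_lt
    (g := fun u => 1 + lam ^ 2 * (s ^ 2 - u ^ 2)) (by fun_prop) hA] with u hu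
  exact (hasDerivAt_phi_s hu).deriv

theorem hasDerivAt_deriv_phi_s (hA : 0 < 1 + lam ^ 2 * (s ^ 2 - r ^ 2)) :
    HasDerivAt (deriv (phi lam r))
      (lam ^ 2 * phi lam r s * (funkRoot lam r s - lam * s) / funkRoot lam r s ^ 3) s := by
  have hQ := (funkRoot_pos hA).ne'
  refine ((((hasDerivAt_phi_s hA).const_mul lam).div (hasDerivAt_funkRoot_s hA) hQ)
    |>.congr_of_eventuallyEq (deriv_phi_eventuallyEq_s hA)).congr_deriv ?_
  field_simp

theorem hasDerivAt_deriv_phi_r (hD : 1 - lam ^ 2 * r ^ 2 ≠ 0)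
    (hA : 0 < 1 + lam ^ 2 * (s ^ 2 - r ^ 2)) :
    HasDerivAt (fun u => deriv (phi lam u) s)
      (lam ^ 3 * r * phi lam r s * (phi lam r s * funkRoot lam r s + 1) / funkRoot lam r s ^ 3)
      r := by
  have hQ := (funkRoot_pos hA).ne'
  refine ((((hasDerivAt_phi_r hD hA).const_mul lam).div (hasDerivAt_funkRoot_r hA) hQ)
    |>.congr_of_eventuallyEq (deriv_phi_eventuallyEq_r hA)).congr_deriv ?_
  field_simp
  ring

theorem not_differentiableAt_phi_r (hD : 1 - lam ^ 2 * r ^ 2 = 0)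
    (hA : 0 < 1 + lam ^ 2 * (s ^ 2 - r ^ 2)) :
    ¬ DifferentiableAt ℝ (fun u => phi lam u s) r := by
  intro h
  have hlam : lam ≠ 0 := by rintro rfl; simp at hD
  have hr : r ≠ 0 := by rintro rfl; simp at hD
  have hprod : HasDerivAt (fun u => phi lam u s * (1 - lam ^ 2 * u ^ 2)) 0 r := by
    refine (h.hasDerivAt.mul
      (((hasDerivAt_pow 2 r).const_mul (lam ^ 2)).const_sub 1)).congr_deriv ?_
    simp [phi_eq_zero hD, hD]
  have heq : (fun u => phi lam u s * (1 - lam ^ 2 * u ^ 2)) =ᶠ[𝓝[≠] r]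
      fun u => funkRoot lam u s + lam * s := by
    filter_upwards [self_mem_nhdsWithin, eventually_nhdsWithin_of_eventually_nhds
      (eventually_ne_nhds (show r ≠ -r by contrapose! hr; linarith))] with u hur hu
    have hDu : 1 - lam ^ 2 * u ^ 2 ≠ 0 := by
      rw [show 1 - lam ^ 2 * u ^ 2 = lam ^ 2 * (r - u) * (r + u) by linear_combination hD]
      exact mul_ne_zero (mul_ne_zero (pow_ne_zero 2 hlam) (sub_ne_zero.mpr (Ne.symm hur)))
        (by contrapose! hu; linarith)
    rw [phi_eq_funkRoot, div_mul_cancel₀ _ hDu]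
  have h0 := hprod.eq_of_eventuallyEq_nhdsNE ((hasDerivAt_funkRoot_r hA).add_const _) heq
  exact div_ne_zero (neg_ne_zero.mpr (mul_ne_zero (pow_ne_zero 2 hlam) hr)) (funkRoot_pos hA).ne'
    h0.symm

theorem not_differentiableAt_deriv_phi_r (hD : 1 - lam ^ 2 * r ^ 2 = 0)
    (hA : 0 < 1 + lam ^ 2 * (s ^ 2 - r ^ 2)) :
    ¬ DifferentiableAt ℝ (fun u => deriv (phi lam u) s) r := by
  intro h
  have hlam : lam ≠ 0 := by rintro rfl; simp at hD
  have hQdiff := (hasDerivAt_funkRoot_r hA).differentiableAt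
  have heq : (fun u => phi lam u s) =ᶠ[𝓝 r]
      fun u => deriv (phi lam u) s * funkRoot lam u s / lam := by
    filter_upwards [deriv_phi_eventuallyEq_r hA,
      hQdiff.continuousAt.eventually_ne (funkRoot_pos hA).ne'] with u hu hQu
    rw [hu]
    field_simp
  exact not_differentiableAt_phi_r hD hA
    (((h.mul hQdiff).div_const lam).congr_of_eventuallyEq heq)

end

theorem lambdaFunk_hamel_pde_general (lam r s : ℝ)
    (hpos : 0 < 1 + lam ^ 2 * (s ^ 2 - r ^ 2)) :
    r * deriv (deriv (phi lam r)) s - deriv (fun u => phi lam u s) r +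
      s * deriv (fun u => deriv (phi lam u) s) r = 0 := by
  by_cases hD : 1 - lam ^ 2 * r ^ 2 = 0
  · rw [phi_eq_zero hD, deriv_zero_of_not_differentiableAt (not_differentiableAt_phi_r hD hpos),
      deriv_zero_of_not_differentiableAt (not_differentiableAt_deriv_phi_r hD hpos)]
    simp
  · rw [(hasDerivAt_deriv_phi_s hpos).deriv, (hasDerivAt_phi_r hD hpos).deriv,
      (hasDerivAt_deriv_phi_r hD hpos).deriv]
    have hφ := phi_mul_funkRoot_sub hD hpos.le
    have hQ := (funkRoot_pos hpos).ne'
    field_simp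
    linear_combination (-(lam ^ 2 * r * phi lam r s * funkRoot lam r s)) * hφ

theorem lambdaFunk_hamel_pde (lam r s : ℝ) (hlam : 0 ≤ lam) (hr : lam * r < 1)
    (hpos : 0 < 1 + lam ^ 2 * (s ^ 2 - r ^ 2)) :
    r * deriv (deriv (phi lam r)) s - deriv (fun u => phi lam u s) r +
      s * deriv (fun u => deriv (phi lam u) s) r = 0 :=
  lambdaFunk_hamel_pde_general lam r s hpos
end

section
/- Let λ > 0 and P ≠ Q in Ω_λ = {x ∈ R² : ||x|| < 1/λ}. Then the quantity (√(λ²⟨P,Q-P⟩² + (1-λ²||P||²)||Q-P||²) - λ⟨P,Q-P⟩)/(√(λ²⟨P,Q-P⟩² + (1-λ²||P||²)||Q-P||²) - λ⟨Q,Q-P⟩) is well-defined (the denominator is nonzero) and strictly greater than 1 whenever P ≠ Q. -/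
open RealInnerProductSpace Classical

theorem dF_ratio_wellDefined_gt_one (lam : ℝ) (hlam : 0 < lam)
    (P Q : EuclideanSpace ℝ (Fin 2)) (hP : ‖P‖ < 1 / lam) (hQ : ‖Q‖ < 1 / lam)
    (hPQ : P ≠ Q) :
    Real.sqrt (lam ^ 2 * ⟪P, Q - P⟫ ^ 2 + (1 - lam ^ 2 * ‖P‖ ^ 2) * ‖Q - P‖ ^ 2)
        - lam * ⟪Q, Q - P⟫ ≠ 0 ∧
    1 < (Real.sqrt (lam ^ 2 * ⟪P, Q - P⟫ ^ 2 + (1 - lam ^ 2 * ‖P‖ ^ 2) * ‖Q - P‖ ^ 2)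
          - lam * ⟪P, Q - P⟫) /
        (Real.sqrt (lam ^ 2 * ⟪P, Q - P⟫ ^ 2 + (1 - lam ^ 2 * ‖P‖ ^ 2) * ‖Q - P‖ ^ 2)
          - lam * ⟪Q, Q - P⟫) := by

  have hvne : Q - P ≠ 0 := sub_ne_zero.mpr (Ne.symm hPQ)
  have hvpos : (0:ℝ) < ‖Q - P‖ := norm_pos_iff.mpr hvne
  have hQeq : Q = P + (Q - P) := by abel
  have hQv : ⟪Q, Q - P⟫ = ⟪P, Q - P⟫ + ‖Q - P‖ ^ 2 := by
    have h : ⟪Q, Q - P⟫ - ⟪P, Q - P⟫ = ⟪Q - P, Q - P⟫ := by rw [← inner_sub_left]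
    rw [real_inner_self_eq_norm_sq] at h
    linarith
  have hQnorm : ‖Q‖ ^ 2 = ‖P‖ ^ 2 + 2 * ⟪P, Q - P⟫ + ‖Q - P‖ ^ 2 := by
    conv_lhs => rw [hQeq]
    rw [norm_add_sq_real]
  have hPlt : lam ^ 2 * ‖P‖ ^ 2 < 1 := by
    have h1 : lam * ‖P‖ < 1 := by
      rw [lt_div_iff₀ hlam] at hP; nlinarith
    nlinarith [norm_nonneg P, mul_nonneg hlam.le (norm_nonneg P)]
  have hQlt : lam ^ 2 * ‖Q‖ ^ 2 < 1 := by
    have h1 : lam * ‖Q‖ < 1 := by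
      rw [lt_div_iff₀ hlam] at hQ; nlinarith
    nlinarith [norm_nonneg Q, mul_nonneg hlam.le (norm_nonneg Q)]
  set s := Real.sqrt (lam ^ 2 * ⟪P, Q - P⟫ ^ 2 + (1 - lam ^ 2 * ‖P‖ ^ 2) * ‖Q - P‖ ^ 2)
    with hs
  have hs0 : 0 ≤ s := Real.sqrt_nonneg _
  have hs2 : s ^ 2 = lam ^ 2 * ⟪P, Q - P⟫ ^ 2 + (1 - lam ^ 2 * ‖P‖ ^ 2) * ‖Q - P‖ ^ 2 := by
    rw [hs, Real.sq_sqrt]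
    have h1 := sub_pos.mpr hPlt
    nlinarith [mul_nonneg (sq_nonneg lam) (sq_nonneg ⟪P, Q - P⟫),
      mul_nonneg h1.le (sq_nonneg ‖Q - P‖)]
  have key : s ^ 2 - (lam * ⟪Q, Q - P⟫) ^ 2 = ‖Q - P‖ ^ 2 * (1 - lam ^ 2 * ‖Q‖ ^ 2) := by
    rw [hs2, hQv, hQnorm]; ring
  have hD : 0 < s - lam * ⟪Q, Q - P⟫ := by
    nlinarith [sq_nonneg (s + lam * ⟪Q, Q - P⟫), mul_pos (mul_pos hvpos hvpos)
      (sub_pos.mpr hQlt)]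
  refine ⟨ne_of_gt hD, (one_lt_div hD).mpr ?_⟩
  have : lam * ⟪Q, Q - P⟫ - lam * ⟪P, Q - P⟫ = lam * ‖Q - P‖ ^ 2 := by
    rw [hQv]; ring
  nlinarith [mul_pos hlam (mul_pos hvpos hvpos)]
end

section
/- Let λ > 0, let P, Q ∈ Ω_λ = {x ∈ R² : ||x|| < 1/λ}, and let r ≥ 1. Then d_F(P,Q) = (1/λ)ln r if and only if ||P/r - Q|| = (1/λ)·(r-1)/r, where d_F(P,Q) = (1/λ)ln[(√(λ²⟨P,Q-P⟩² + (1-λ²||P||²)||Q-P||²) - λ⟨P,Q-P⟩)/(√(λ²⟨P,Q-P⟩² + (1-λ²||P||²)||Q-P||²) - λ⟨Q,Q-P⟩)] for P ≠ Q and d_F(P,P) = 0. -/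
open RealInnerProductSpace Classical

/-!
Write `v = Q - P` and `S = √(funkDisc λ P v)`; `λ² · funkDisc λ P v` is the reduced discriminant
of `t ↦ λ²‖P + t v‖² - 1`, so it does not change when `P` moves along `v`, and `S` exceeds
`|λ⟪X, v⟫|` for every point `X` of the open disc. Since `⟪Q, v⟫ = ⟪P, v⟫ + ‖v‖²`, the Funk ratio
equals `r` iff `(r - 1)(S - λ⟪P, v⟫) = r λ‖v‖²`. This is one linear factor of the quadratic form
`‖v‖² (λ²‖αP + βv‖² - α²)` at `(α, β) = (r - 1, r)`; the other factor is positive there, and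
`(r - 1)P + r v = -r (P / r - Q)`.
-/

section FunkRatio

variable {E : Type*} [NormedAddCommGroup E] [InnerProductSpace ℝ E]

noncomputable def funkDisc (lam : ℝ) (P v : E) : ℝ :=
  lam ^ 2 * ⟪P, v⟫ ^ 2 + (1 - lam ^ 2 * ‖P‖ ^ 2) * ‖v‖ ^ 2

noncomputable def funkRatio (lam : ℝ) (P Q : E) : ℝ :=
  (√(funkDisc lam P (Q - P)) - lam * ⟪P, Q - P⟫) / (√(funkDisc lam P (Q - P)) - lam * ⟪Q, Q - P⟫)

lemma funkDisc_add_smul (lam s : ℝ) (P v : E) :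
    funkDisc lam (P + s • v) v = funkDisc lam P v := by
  simp only [funkDisc, inner_add_left, real_inner_smul_left, real_inner_smul_right,
    real_inner_self_eq_norm_sq, norm_add_sq_real, norm_smul, Real.norm_eq_abs, mul_pow, sq_abs]
  ring

lemma abs_mul_inner_lt_sqrt_funkDisc {lam : ℝ} {P : E} (v : E) (hP : lam ^ 2 * ‖P‖ ^ 2 < 1)
    (hv : v ≠ 0) : |lam * ⟪P, v⟫| < √(funkDisc lam P v) := by
  have hpos : 0 < (1 - lam ^ 2 * ‖P‖ ^ 2) * ‖v‖ ^ 2 :=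
    mul_pos (sub_pos.2 hP) (pow_pos (norm_pos_iff.2 hv) 2)
  rw [Real.lt_sqrt (abs_nonneg _), sq_abs, mul_pow, funkDisc]
  linarith

lemma funkDisc_factor {lam S : ℝ} {P v : E} (hS : S ^ 2 = funkDisc lam P v) (α β : ℝ) :
    ‖v‖ ^ 2 * (lam ^ 2 * ‖α • P + β • v‖ ^ 2 - α ^ 2) =
      (lam * ‖v‖ ^ 2 * β - (S - lam * ⟪P, v⟫) * α) *
        (lam * ‖v‖ ^ 2 * β + (S + lam * ⟪P, v⟫) * α) := by
  rw [funkDisc] at hS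
  rw [norm_add_sq_real, norm_smul, norm_smul, real_inner_smul_left, real_inner_smul_right,
    Real.norm_eq_abs, Real.norm_eq_abs, mul_pow, mul_pow, sq_abs, sq_abs]
  linear_combination α ^ 2 * hS

lemma abs_mul_inner_lt_sqrt_funkDisc_of_ne {lam : ℝ} {P Q : E} (hP : lam ^ 2 * ‖P‖ ^ 2 < 1)
    (hQ : lam ^ 2 * ‖Q‖ ^ 2 < 1) (hPQ : P ≠ Q) :
    |lam * ⟪P, Q - P⟫| < √(funkDisc lam P (Q - P)) ∧
      |lam * ⟪Q, Q - P⟫| < √(funkDisc lam P (Q - P)) := by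
  have hv : Q - P ≠ 0 := sub_ne_zero.2 hPQ.symm
  have hdisc := funkDisc_add_smul lam 1 P (Q - P)
  rw [one_smul, add_sub_cancel] at hdisc
  exact ⟨abs_mul_inner_lt_sqrt_funkDisc _ hP hv, hdisc ▸ abs_mul_inner_lt_sqrt_funkDisc _ hQ hv⟩

lemma funkRatio_pos {lam : ℝ} {P Q : E} (hP : lam ^ 2 * ‖P‖ ^ 2 < 1)
    (hQ : lam ^ 2 * ‖Q‖ ^ 2 < 1) (hPQ : P ≠ Q) : 0 < funkRatio lam P Q := by
  obtain ⟨hPv, hQv⟩ := abs_mul_inner_lt_sqrt_funkDisc_of_ne hP hQ hPQ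
  exact div_pos (sub_pos.2 (le_abs_self _ |>.trans_lt hPv))
    (sub_pos.2 (le_abs_self _ |>.trans_lt hQv))

lemma funkRatio_eq_iff {lam r : ℝ} {P Q : E} (hlam : 0 < lam) (hP : lam ^ 2 * ‖P‖ ^ 2 < 1)
    (hQ : lam ^ 2 * ‖Q‖ ^ 2 < 1) (hPQ : P ≠ Q) (hr : 1 ≤ r) :
    funkRatio lam P Q = r ↔ lam ^ 2 * ‖(r - 1) • P + r • (Q - P)‖ ^ 2 = (r - 1) ^ 2 := by
  obtain ⟨hPv, hQv⟩ := abs_mul_inner_lt_sqrt_funkDisc_of_ne hP hQ hPQ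
  set v := Q - P
  set S := √(funkDisc lam P v)
  have hv : 0 < ‖v‖ ^ 2 := pow_pos (norm_pos_iff.2 (sub_ne_zero.2 hPQ.symm)) 2
  have hQinner : ⟪Q, v⟫ = ⟪P, v⟫ + ‖v‖ ^ 2 := by
    rw [← real_inner_self_eq_norm_sq, ← inner_add_left, add_sub_cancel]
  have hfactor : 0 < lam * ‖v‖ ^ 2 * r + (S + lam * ⟪P, v⟫) * (r - 1) := by
    have := neg_abs_le (lam * ⟪P, v⟫)
    have : 0 ≤ (S + lam * ⟪P, v⟫) * (r - 1) := mul_nonneg (by linarith) (by linarith)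
    have : 0 < lam * ‖v‖ ^ 2 * r := by positivity
    linarith
  have hS : S ^ 2 = funkDisc lam P v :=
    Real.sq_sqrt (Real.sqrt_pos.1 ((abs_nonneg _).trans_lt hPv)).le
  calc funkRatio lam P Q = r
      ↔ S - lam * ⟪P, v⟫ = r * (S - lam * ⟪Q, v⟫) :=
        div_eq_iff (sub_pos.2 ((le_abs_self _).trans_lt hQv)).ne'
    _ ↔ lam * ‖v‖ ^ 2 * r - (S - lam * ⟪P, v⟫) * (r - 1) = 0 := by
        rw [hQinner]; constructor <;> intro h <;> linarith
    _ ↔ ‖v‖ ^ 2 * (lam ^ 2 * ‖(r - 1) • P + r • v‖ ^ 2 - (r - 1) ^ 2) = 0 := by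
        rw [funkDisc_factor hS, mul_eq_zero, or_iff_left hfactor.ne']
    _ ↔ lam ^ 2 * ‖(r - 1) • P + r • v‖ ^ 2 = (r - 1) ^ 2 := by
        rw [mul_eq_zero, or_iff_right hv.ne', sub_eq_zero]

lemma norm_one_div_smul_sub_eq_iff {lam r : ℝ} (hlam : 0 < lam) (hr : 1 ≤ r) (P Q : E) :
    ‖(1 / r) • P - Q‖ = 1 / lam * ((r - 1) / r) ↔
      lam ^ 2 * ‖(r - 1) • P + r • (Q - P)‖ ^ 2 = (r - 1) ^ 2 := by
  have hr0 : 0 < r := by linarith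
  have hw : (r - 1) • P + r • (Q - P) = -(r • ((1 / r) • P - Q)) := by
    rw [smul_sub r ((1 / r) • P), smul_smul, mul_one_div_cancel hr0.ne', one_smul]
    module
  rw [hw, norm_neg, norm_smul, Real.norm_of_nonneg hr0.le, ← mul_pow, ← mul_assoc,
    pow_left_inj₀ (by positivity) (by linarith) two_ne_zero]
  constructor
  · intro h; rw [h]; field_simp
  · intro h; field_simp; linarith

lemma sq_mul_sq_norm_sub_one_smul_eq_sq_iff {lam r : ℝ} {P : E} (hP : lam ^ 2 * ‖P‖ ^ 2 < 1) :
    lam ^ 2 * ‖(r - 1) • P‖ ^ 2 = (r - 1) ^ 2 ↔ r = 1 := by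
  rw [norm_smul, Real.norm_eq_abs, mul_pow, sq_abs]
  constructor
  · intro h
    have h' : (r - 1) ^ 2 * (1 - lam ^ 2 * ‖P‖ ^ 2) = 0 := by linear_combination -h
    rwa [mul_eq_zero, or_iff_left (by linarith), pow_eq_zero_iff two_ne_zero, sub_eq_zero] at h'
  · rintro rfl
    ring

end FunkRatio

lemma sq_mul_sq_norm_lt_one {E : Type*} [SeminormedAddCommGroup E] {lam : ℝ} {P : E}
    (hlam : 0 < lam) (hP : ‖P‖ < 1 / lam) : lam ^ 2 * ‖P‖ ^ 2 < 1 := by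
  rw [← mul_pow]
  exact pow_lt_one₀ (by positivity) (by rwa [lt_div_iff₀ hlam, mul_comm] at hP) two_ne_zero

lemma dF_of_ne {lam : ℝ} {P Q : EuclideanSpace ℝ (Fin 2)} (hPQ : P ≠ Q) :
    dF lam P Q = 1 / lam * Real.log (funkRatio lam P Q) := by
  rw [dF, if_neg hPQ]
  rfl

theorem dF_eq_log_iff (lam : ℝ) (hlam : 0 < lam) (P Q : EuclideanSpace ℝ (Fin 2))
    (hP : ‖P‖ < 1 / lam) (hQ : ‖Q‖ < 1 / lam) (r : ℝ) (hr : 1 ≤ r) :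
    dF lam P Q = (1 / lam) * Real.log r ↔
      ‖(1 / r) • P - Q‖ = (1 / lam) * ((r - 1) / r) := by
  have hr0 : 0 < r := by linarith
  have hP' := sq_mul_sq_norm_lt_one hlam hP
  have hQ' := sq_mul_sq_norm_lt_one hlam hQ
  rw [norm_one_div_smul_sub_eq_iff hlam hr]
  by_cases hPQ : P = Q
  · subst hPQ
    have hlog : 0 = 1 / lam * Real.log r ↔ r = 1 := by
      rw [eq_comm, mul_eq_zero, or_iff_right (by positivity), ← Real.log_one,
        Real.log_injOn_pos.eq_iff hr0 (Set.mem_Ioi.2 one_pos)]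
    rw [dF, if_pos rfl, hlog, sub_self, smul_zero, add_zero,
      sq_mul_sq_norm_sub_one_smul_eq_sq_iff hP']
  · rw [dF_of_ne hPQ, mul_right_inj' (by positivity),
      Real.log_injOn_pos.eq_iff (funkRatio_pos hP' hQ' hPQ) hr0,
      funkRatio_eq_iff hlam hP' hQ' hPQ hr]
end

section
/- Let λ > 0 and let P ≠ Q be points in Ω_λ. Then the λ-Funk length of the straight segment c(t) = tQ + (1-t)P, t ∈ [0,1], equals (1/λ)ln(t₂/(t₂-1)), where t₂ = (-λ⟨P,Q-P⟩ + √k)/(λ||Q-P||²) and k = ||Q-P||²(1-λ²||P||²) + λ²⟨P,Q-P⟩²; that is, ∫₀¹ F(c(t), Q-P) dt = (1/λ)ln(t₂/(t₂-1)). -/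
open RealInnerProductSpace Classical

set_option maxHeartbeats 1600000 in
theorem funk_length_of_segment (lam : ℝ) (hlam : 0 < lam)
    (P Q : EuclideanSpace ℝ (Fin 2)) (hP : ‖P‖ < 1 / lam) (hQ : ‖Q‖ < 1 / lam)
    (hPQ : P ≠ Q) (k t₂ : ℝ)
    (hk : k = ‖Q - P‖ ^ 2 * (1 - lam ^ 2 * ‖P‖ ^ 2) + lam ^ 2 * ⟪P, Q - P⟫ ^ 2)
    (ht₂ : t₂ = (-(lam * ⟪P, Q - P⟫) + Real.sqrt k) / (lam * ‖Q - P‖ ^ 2)) :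
    ∫ t in (0:ℝ)..1, Funk lam (t • Q + (1 - t) • P) (Q - P) =
      (1 / lam) * Real.log (t₂ / (t₂ - 1)) := by
  set a : ℝ := ⟪P, Q - P⟫ with ha
  set b : ℝ := ‖Q - P‖ ^ 2 with hb
  set m : ℝ := ‖P‖ ^ 2 with hm
  set s : ℝ := Real.sqrt k with hs
  have hu : Q - P ≠ 0 := sub_ne_zero.2 (Ne.symm hPQ)
  clear_value a b m s
  have hbpos : 0 < b := by rw [hb]; exact pow_pos (norm_pos_iff.mpr hu) 2
  have hmlt : lam ^ 2 * m < 1 := by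
    have h1 : lam * ‖P‖ < 1 := by
      rw [lt_div_iff₀ hlam] at hP; nlinarith
    rw [hm]
    nlinarith [norm_nonneg P, mul_nonneg hlam.le (norm_nonneg P)]
  have hkpos : 0 < k := by
    rw [hk]; nlinarith [sq_nonneg (lam * a)]
  have hspos : 0 < s := by rw [hs]; exact Real.sqrt_pos.2 hkpos
  have hsq : s ^ 2 = k := by rw [hs]; exact Real.sq_sqrt hkpos.le
  have ht2' : t₂ * (lam * b) = s - lam * a := by
    rw [ht₂]; field_simp; ring
  -- pointwise value of the integrand
  have key : ∀ t ∈ Set.Icc (0:ℝ) 1,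
      Funk lam (t • Q + (1 - t) • P) (Q - P) = (lam * (t₂ - t))⁻¹ ∧ 0 < lam * (t₂ - t) := by
    intro t ht
    obtain ⟨ht0, ht1⟩ := ht
    set ct : EuclideanSpace ℝ (Fin 2) := t • Q + (1 - t) • P with hct
    have hceq : ct = P + t • (Q - P) := by
      rw [hct, smul_sub, sub_smul, one_smul]; abel
    have hinner : ⟪ct, Q - P⟫ = a + t * b := by
      rw [hceq, inner_add_left, real_inner_smul_left, ha, hb,
        real_inner_self_eq_norm_sq]
    have hnormsq : ‖ct‖ ^ 2 = m + 2 * t * a + t ^ 2 * b := by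
      rw [hceq, norm_add_sq_real, real_inner_smul_right, norm_smul, Real.norm_eq_abs,
        mul_pow, sq_abs, hm, ha, hb]
      ring
    have hclt : ‖ct‖ < 1 / lam := by
      calc ‖ct‖ ≤ ‖t • Q‖ + ‖(1 - t) • P‖ := norm_add_le _ _
        _ = t * ‖Q‖ + (1 - t) * ‖P‖ := by
            rw [norm_smul, norm_smul, Real.norm_eq_abs, Real.norm_eq_abs,
              abs_of_nonneg ht0, abs_of_nonneg (by linarith)]
        _ < 1 / lam := by
            rcases eq_or_lt_of_le ht0 with h | h
            · rw [← h]; simpa using hP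
            · rcases eq_or_lt_of_le ht1 with h1 | h1
              · rw [h1]; simpa using hQ
              · nlinarith
    have hDpos : 0 < 1 - lam ^ 2 * ‖ct‖ ^ 2 := by
      have h1 : lam * ‖ct‖ < 1 := by
        rw [lt_div_iff₀ hlam] at hclt; nlinarith
      nlinarith [norm_nonneg ct, mul_nonneg hlam.le (norm_nonneg ct)]
    clear_value ct
    have harg : lam ^ 2 * ⟪ct, Q - P⟫ ^ 2 + ‖Q - P‖ ^ 2 * (1 - lam ^ 2 * ‖ct‖ ^ 2) = k := by
      rw [hinner, hnormsq, ← hb, hk]; ring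
    have hsqrt : Real.sqrt (lam ^ 2 * ⟪ct, Q - P⟫ ^ 2 +
        ‖Q - P‖ ^ 2 * (1 - lam ^ 2 * ‖ct‖ ^ 2)) = s := by rw [harg]; exact hs.symm
    have hDpos' : 0 < 1 - lam ^ 2 * (m + 2 * t * a + t ^ 2 * b) := by
      rw [← hnormsq]; exact hDpos
    have hNpos : 0 < s + lam * (a + t * b) := by
      have h2 : s ^ 2 - (lam * (a + t * b)) ^ 2 =
          b * (1 - lam ^ 2 * (m + 2 * t * a + t ^ 2 * b)) := by
        rw [hsq, hk]; ring
      have h4 : (lam * (a + t * b)) ^ 2 < s ^ 2 := by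
        linarith [mul_pos hbpos hDpos']
      have h5 : |lam * (a + t * b)| < s := abs_lt_of_sq_lt_sq h4 hspos.le
      linarith [neg_abs_le (lam * (a + t * b))]
    have halg : (s + lam * (a + t * b)) * (lam * (t₂ - t)) =
        1 - lam ^ 2 * (m + 2 * t * a + t ^ 2 * b) := by
      have hb0 : b ≠ 0 := hbpos.ne'
      have h3 : b * ((s + lam * (a + t * b)) * (lam * (t₂ - t))) =
          b * (1 - lam ^ 2 * (m + 2 * t * a + t ^ 2 * b)) := by
        linear_combination (s + lam * a + lam * t * b) * ht2' + hsq + hk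
      exact mul_left_cancel₀ hb0 h3
    have hlpos : 0 < lam * (t₂ - t) := by
      by_contra h
      push_neg at h
      linarith [mul_nonpos_of_nonneg_of_nonpos hNpos.le h, halg, hDpos']
    refine ⟨?_, hlpos⟩
    simp only [Funk]
    rw [hsqrt, hinner, hnormsq, ← halg]
    rw [div_mul_cancel_left₀ hNpos.ne']
  have ht2gt : 1 < t₂ := by
    have h1 := (key 1 ⟨zero_le_one, le_refl 1⟩).2
    nlinarith
  have hcong : Set.EqOn (fun t => Funk lam (t • Q + (1 - t) • P) (Q - P))
      (fun t => (lam * (t₂ - t))⁻¹) (Set.uIcc 0 1) := by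
    rw [Set.uIcc_of_le zero_le_one]
    intro t ht
    exact (key t ht).1
  rw [intervalIntegral.integral_congr hcong]
  simp_rw [mul_inv]
  rw [intervalIntegral.integral_const_mul]
  have hint : ∫ t in (0:ℝ)..1, (t₂ - t)⁻¹ = Real.log (t₂ / (t₂ - 1)) := by
    have hcomp := intervalIntegral.integral_comp_sub_left (a := (0:ℝ)) (b := 1)
      (fun x => x⁻¹) t₂
    rw [hcomp, sub_zero, integral_inv]
    exact Set.notMem_uIcc_of_lt (by linarith) (by linarith)
  rw [hint, one_div]
end
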